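/- arXiv:2505.19711 — 2 statements merged into one kernel-verified Lean document; each statement's English description precedes it below -/
import Mathlib

section
/- Let M ≥ 1, let b : ℕ → ℝ be a potential, let u^f be the solution of the half-line system with potential b, and let v^f be the solution of the finite system with N = M (potential (b_1,…,b_M) and Dirichlet condition at n = M+1). Then for every control f : ℕ → ℝ and every 0 ≤ t ≤ 2M: u^f_{1,t} = v^f_{1,t}. -/
/-- `sol b f t n` is the solution `u^f_{n,t}` of the discrete Schrödinger dynamical system
with potential `b` and boundary control `f`:
`u_{n,t+1} + u_{n,t-1} - u_{n+1,t} - u_{n-1,t} + b_n u_{n,t} = 0` for `n ≥ 1`, `t ≥ 0`,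
`u_{n,-1} = u_{n,0} = 0` for `n ≥ 1`, and `u_{0,t} = f_t` for `t ≥ 0`
(the first argument is the time `t`, the second the space variable `n`). -/
noncomputable def sol (b f : ℕ → ℝ) : ℕ → ℕ → ℝ
  | 0, n => if n = 0 then f 0 else 0
  | 1, n => if n = 0 then f 1 else
      sol b f 0 (n + 1) + sol b f 0 (n - 1) - b n * sol b f 0 n
  | (t + 2), n => if n = 0 then f (t + 2) else
      sol b f (t + 1) (n + 1) + sol b f (t + 1) (n - 1) - b n * sol b f (t + 1) n - sol b f t n

/-- `solFin N b f t n` is the solution `v^f_{n,t}` of the finite discrete Schrödinger system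
with Dirichlet condition at `n = N+1`:
`v_{n,t+1} + v_{n,t-1} - v_{n+1,t} - v_{n-1,t} + b_n v_{n,t} = 0` for `1 ≤ n ≤ N`, `t ≥ 0`,
`v_{n,-1} = v_{n,0} = 0`, `v_{0,t} = f_t`, `v_{N+1,t} = 0`
(the first argument after `b f` is the time `t`, the last the space variable `n`). -/
noncomputable def solFin (N : ℕ) (b f : ℕ → ℝ) : ℕ → ℕ → ℝ
  | 0, n => if n = 0 then f 0 else 0
  | 1, n => if n = 0 then f 1 else if n = N + 1 then 0 else
      solFin N b f 0 (n + 1) + solFin N b f 0 (n - 1) - b n * solFin N b f 0 n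
  | (t + 2), n => if n = 0 then f (t + 2) else if n = N + 1 then 0 else
      solFin N b f (t + 1) (n + 1) + solFin N b f (t + 1) (n - 1) - b n * solFin N b f (t + 1) n
        - solFin N b f t n

lemma sol_eq_zero (b f : ℕ → ℝ) : ∀ t n, t < n → sol b f t n = 0 := by
  intro t
  induction t using Nat.twoStepInduction with
  | zero =>
    intro n h
    have h0 : n ≠ 0 := by omega
    simp [sol, h0]
  | one =>
    intro n h
    have h0 : n ≠ 0 := by omega
    have z : ∀ m, m ≠ 0 → sol b f 0 m = 0 := fun m hm => by simp [sol, hm]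
    rw [sol]
    simp only [h0, if_false]
    rw [z (n + 1) (by omega), z (n - 1) (by omega), z n h0]
    ring
  | more t ih ih1 =>
    intro n h
    have h0 : n ≠ 0 := by omega
    rw [sol]
    simp only [h0, if_false]
    rw [ih1 (n + 1) (by omega), ih1 (n - 1) (by omega), ih1 n (by omega), ih n (by omega)]
    ring

lemma solFin_eq_zero (N : ℕ) (b f : ℕ → ℝ) : ∀ t n, t < n → solFin N b f t n = 0 := by
  intro t
  induction t using Nat.twoStepInduction with
  | zero =>
    intro n h
    have h0 : n ≠ 0 := by omega
    simp [solFin, h0]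
  | one =>
    intro n h
    have h0 : n ≠ 0 := by omega
    have z : ∀ m, m ≠ 0 → solFin N b f 0 m = 0 := fun m hm => by simp [solFin, hm]
    rw [solFin]
    simp only [h0, if_false]
    by_cases hN : n = N + 1
    · simp [hN]
    · simp only [hN, if_false]
      rw [z (n + 1) (by omega), z (n - 1) (by omega), z n h0]
      ring
  | more t ih ih1 =>
    intro n h
    have h0 : n ≠ 0 := by omega
    rw [solFin]
    simp only [h0, if_false]
    by_cases hN : n = N + 1
    · simp [hN]
    · simp only [hN, if_false]
      rw [ih1 (n + 1) (by omega), ih1 (n - 1) (by omega), ih1 n (by omega), ih n (by omega)]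
      ring

lemma sol_eq_solFin (M : ℕ) (hM : 1 ≤ M) (b f : ℕ → ℝ) :
    ∀ t n, n + t ≤ 2 * M + 1 → sol b f t n = solFin M b f t n := by
  intro t
  induction t using Nat.twoStepInduction with
  | zero => intro n _; simp [sol, solFin]
  | one =>
    intro n hn
    rcases Nat.eq_zero_or_pos n with h0 | h0
    · subst h0; simp [sol, solFin]
    by_cases ht : 1 < n
    · rw [sol_eq_zero b f 1 n ht, solFin_eq_zero M b f 1 n ht]
    · have hn1 : n = 1 := by omega
      subst hn1
      have hN : (1 : ℕ) ≠ M + 1 := by omega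
      have z : ∀ m, sol b f 0 m = solFin M b f 0 m := fun m => by simp [sol, solFin]
      rw [sol, solFin]
      simp only [hN, if_false, one_ne_zero]
      rw [z 2, z 0, z 1]
  | more t ih ih1 =>
    intro n hn
    rcases Nat.eq_zero_or_pos n with h0 | h0
    · subst h0; simp [sol, solFin]
    by_cases ht : t + 2 < n
    · rw [sol_eq_zero b f (t + 2) n ht, solFin_eq_zero M b f (t + 2) n ht]
    · have h0' : n ≠ 0 := by omega
      have hN : n ≠ M + 1 := by omega
      rw [sol, solFin]
      simp only [h0', hN, if_false]
      rw [ih1 (n + 1) (by omega), ih1 (n - 1) (by omega), ih1 n (by omega), ih n (by omega)]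

/-- For times `t ≤ 2M` the half-line solution does not feel the Dirichlet condition at
`n = M + 1`. -/
theorem halfline_eq_finite (M : ℕ) (hM : 1 ≤ M) (b : ℕ → ℝ) :
    ∀ f : ℕ → ℝ, ∀ t, t ≤ 2 * M → sol b f t 1 = solFin M b f t 1 := by
  intro f t ht
  exact sol_eq_solFin M hM b f t 1 (by omega)
end

section
/- For every potential b : ℕ → ℝ and every T ≥ 1, the connecting matrix C^T with entries C^T_{ij} = Σ_{k=0}^{T−max(i,j)} r_{|i−j|+2k} (r the response vector of b) is symmetric and positive definite, and moreover det C^l = 1 for every 1 ≤ l ≤ T, where C^l is the l×l matrix with entries C^l_{ij} = Σ_{k=0}^{l−max(i,j)} r_{|i−j|+2k}. -/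
/-- The delta control: `δ_0 = 1`, `δ_t = 0` for `t ≥ 1`. -/
noncomputable def delta : ℕ → ℝ := fun t => if t = 0 then 1 else 0

/-- The response vector of the potential `b`: `r_s = u^δ_{1,s+1}`. -/
noncomputable def resp (b : ℕ → ℝ) (s : ℕ) : ℝ := sol b delta (s + 1) 1

/-- The entries of the connecting matrix: `Cmat r T i j = Σ_{k=0}^{T - max i j} r_{|i-j| + 2k}`
(`i`, `j` are 1-based indices). -/
noncomputable def Cmat (r : ℕ → ℝ) (T i j : ℕ) : ℝ :=
  ∑ k ∈ Finset.range (T - max i j + 1), r (max i j - min i j + 2 * k)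

/-!
Let `A` be the wave matrix `A_{ij} = u^δ_{T-j, T-i}`, i.e. the waves `u^δ_{·,τ}` at the times
`τ = T, …, 1`, read at the sites `T, …, 1`. Finite propagation speed makes `A` upper triangular
with unit diagonal, so `det A = 1`. Blagoveshchenskii's identity
`Σ_n u^δ_{n,τ} u^δ_{n,σ} = Σ_{k < min(τ,σ)} r_{|τ-σ|+2k}` holds because both sides satisfy the
same discrete wave equation in `(τ, σ)` (for the left side this is a discrete Green's formula) and
agree for `τ ≤ 1` or `σ = 0`. It says exactly that `C^T = A Aᵀ`, which is therefore symmetric,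
positive definite and of determinant `1`.
-/

open Finset Matrix

section Propagation

variable (b f : ℕ → ℝ)

theorem sol_boundary (t : ℕ) : sol b f t 0 = f t := by
  rcases t with _ | _ | t <;> simp [sol]

theorem sol_time_zero {n : ℕ} (hn : n ≠ 0) : sol b f 0 n = 0 := by
  simp [sol, hn]

theorem sol_time_one {n : ℕ} (hn : n ≠ 0) :
    sol b f 1 n = sol b f 0 (n + 1) + sol b f 0 (n - 1) - b n * sol b f 0 n :=
  if_neg hn

theorem sol_time_add_two (t : ℕ) {n : ℕ} (hn : n ≠ 0) :
    sol b f (t + 2) n =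
      sol b f (t + 1) (n + 1) + sol b f (t + 1) (n - 1) - b n * sol b f (t + 1) n - sol b f t n :=
  if_neg hn

theorem sol_eq_zero_of_lt {t n : ℕ} (h : t < n) : sol b f t n = 0 := by
  induction t using Nat.strong_induction_on generalizing n with
  | _ t ih =>
    match t with
    | 0 => exact sol_time_zero b f (by omega)
    | 1 =>
      rw [sol_time_one b f (by omega), sol_time_zero b f (by omega), sol_time_zero b f (by omega),
        sol_time_zero b f (by omega)]
      ring
    | t + 2 =>
      rw [sol_time_add_two b f t (by omega), ih (t + 1) (by omega) (by omega),
        ih (t + 1) (by omega) (by omega), ih (t + 1) (by omega) (by omega),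
        ih t (by omega) (by omega)]
      ring

theorem sol_self (n : ℕ) : sol b f n n = f 0 := by
  induction n using Nat.strong_induction_on with
  | _ n ih =>
    match n with
    | 0 => simp [sol]
    | 1 => simp [sol_time_one b f one_ne_zero, sol_time_zero, sol_boundary]
    | n + 2 =>
      rw [sol_time_add_two b f n (by omega), sol_eq_zero_of_lt b f (by omega),
        sol_eq_zero_of_lt b f (n := n + 2) (by omega), sol_eq_zero_of_lt b f (n := n + 2) (by omega),
        show n + 2 - 1 = n + 1 by omega, ih (n + 1) (by omega)]
      ring

end Propagation

section Blagoveshchenskii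

variable (b : ℕ → ℝ)

noncomputable def waveGram (N τ σ : ℕ) : ℝ :=
  ∑ n ∈ range N, sol b delta τ (n + 1) * sol b delta σ (n + 1)

theorem waveGram_zero_left (N σ : ℕ) : waveGram b N 0 σ = 0 :=
  sum_eq_zero fun n _ => by rw [sol_time_zero b delta n.succ_ne_zero, zero_mul]

theorem waveGram_zero_right (N τ : ℕ) : waveGram b N τ 0 = 0 :=
  sum_eq_zero fun n _ => by rw [sol_time_zero b delta n.succ_ne_zero, mul_zero]

theorem waveGram_one_succ {N : ℕ} (hN : 1 ≤ N) (s : ℕ) : waveGram b N 1 (s + 1) = resp b s := by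
  obtain ⟨N, rfl⟩ := Nat.exists_eq_add_of_le' hN
  rw [waveGram, sum_range_succ', sum_eq_zero fun n _ => by
    rw [sol_eq_zero_of_lt b delta (by omega : 1 < n + 1 + 1), zero_mul]]
  simp [sol_self, delta, resp]

/-- Discrete Green's formula: the potential terms cancel, the rest telescopes, and the boundary
terms vanish at the site `0` because `δ_τ = 0` for `τ ≥ 1`, and at the sites `N, N + 1` by finite
propagation speed. -/
theorem waveGram_add_two {t N : ℕ} (s : ℕ) (hN : t + 2 ≤ N) :
    waveGram b N (t + 2) (s + 1) + waveGram b N t (s + 1) =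
      waveGram b N (t + 1) (s + 2) + waveGram b N (t + 1) s := by
  set u := sol b delta (t + 1)
  set v := sol b delta (s + 1)
  set φ : ℕ → ℝ := fun m => u (m + 1) * v m - u m * v (m + 1)
  have green (n : ℕ) :
      (sol b delta (t + 2) (n + 1) + sol b delta t (n + 1)) * v (n + 1) -
        (sol b delta (s + 2) (n + 1) + sol b delta s (n + 1)) * u (n + 1) = φ (n + 1) - φ n := by
    rw [sol_time_add_two b delta t (by omega : n + 1 ≠ 0),
      sol_time_add_two b delta s (by omega : n + 1 ≠ 0), Nat.add_sub_cancel]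
    ring
  have hφN : φ N = 0 := by
    simp only [φ, u, sol_eq_zero_of_lt b delta (by omega : t + 1 < N + 1),
      sol_eq_zero_of_lt b delta (by omega : t + 1 < N), zero_mul, sub_zero]
  have hφ0 : φ 0 = 0 := by
    simp only [φ, u, v, sol_boundary, delta, if_neg (Nat.succ_ne_zero _), mul_zero, zero_mul,
      sub_zero]
  rw [← sub_eq_zero]
  calc _ = ∑ n ∈ range N, (φ (n + 1) - φ n) := by
        simp only [waveGram, ← green, ← sum_add_distrib, ← sum_sub_distrib]
        refine sum_congr rfl fun n _ => ?_
        ring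
    _ = 0 := by rw [sum_range_sub, hφN, hφ0, sub_zero]

end Blagoveshchenskii

section ConnectingSum

variable (r : ℕ → ℝ)

/-- `Cmat r T i j` in the reversed indices `τ = T + 1 - i`, `σ = T + 1 - j`, in which it no longer
depends on `T`. -/
noncomputable def revCmat (τ σ : ℕ) : ℝ :=
  ∑ k ∈ range (min τ σ), r (max τ σ - min τ σ + 2 * k)

theorem Cmat_eq_revCmat {T i j : ℕ} (hi : i ≤ T) (hj : j ≤ T) :
    Cmat r T i j = revCmat r (T + 1 - i) (T + 1 - j) := by
  rw [Cmat, revCmat, show T - max i j + 1 = min (T + 1 - i) (T + 1 - j) by omega,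
    show max i j - min i j = max (T + 1 - i) (T + 1 - j) - min (T + 1 - i) (T + 1 - j) by omega]

theorem revCmat_comm (τ σ : ℕ) : revCmat r τ σ = revCmat r σ τ := by
  rw [revCmat, revCmat, min_comm, max_comm]

theorem revCmat_of_le {τ σ : ℕ} (h : τ ≤ σ) :
    revCmat r τ σ = ∑ k ∈ range τ, r (σ - τ + 2 * k) := by
  rw [revCmat, min_eq_left h, max_eq_right h]

theorem revCmat_zero_right (τ : ℕ) : revCmat r τ 0 = 0 := by
  rw [revCmat_comm, revCmat_of_le r (Nat.zero_le τ), sum_range_zero]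

theorem revCmat_add_two (t s : ℕ) :
    revCmat r (t + 2) (s + 1) + revCmat r t (s + 1) =
      revCmat r (t + 1) (s + 2) + revCmat r (t + 1) s := by
  wlog hts : t ≤ s generalizing t s
  · have := this s t (by omega)
    simp only [revCmat_comm r (s + 1), revCmat_comm r (s + 2), revCmat_comm r s] at this
    linarith
  obtain rfl | hts := hts.eq_or_lt
  · rw [revCmat_comm r (t + 2), revCmat_comm r t]
  obtain ⟨d, rfl⟩ := Nat.exists_eq_add_of_lt hts
  rw [revCmat_of_le r (by omega), revCmat_of_le r (by omega), revCmat_of_le r (by omega),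
    revCmat_of_le r (by omega), show t + d + 1 + 1 - (t + 2) = d by omega,
    show t + d + 1 + 1 - t = d + 2 by omega, show t + d + 1 + 2 - (t + 1) = d + 2 by omega,
    show t + d + 1 - (t + 1) = d by omega]
  simp only [sum_range_succ, show d + 2 * (t + 1) = d + 2 + 2 * t by ring]
  ring

end ConnectingSum

theorem waveGram_eq_revCmat (b : ℕ → ℝ) {τ N : ℕ} (σ : ℕ) (hN : τ ≤ N) :
    waveGram b N τ σ = revCmat (resp b) τ σ := by
  induction τ using Nat.strong_induction_on generalizing σ with
  | _ τ ih =>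
    match τ, σ with
    | 0, σ => rw [waveGram_zero_left, revCmat_comm, revCmat_zero_right]
    | τ, 0 => rw [waveGram_zero_right, revCmat_zero_right]
    | 1, s + 1 => rw [waveGram_one_succ b hN, revCmat_of_le _ (by omega)]; simp
    | t + 2, s + 1 =>
      have := waveGram_add_two b s hN
      rw [ih t (by omega) _ (by omega), ih (t + 1) (by omega) _ (by omega),
        ih (t + 1) (by omega) _ (by omega)] at this
      linarith [revCmat_add_two (resp b) t s]

section WaveMatrix

variable (b : ℕ → ℝ) (T : ℕ)

noncomputable def waveMatrix : Matrix (Fin T) (Fin T) ℝ :=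
  of fun i j => sol b delta (T - i) (T - j)

theorem waveMatrix_isUpperTriangular : (waveMatrix b T).IsUpperTriangular := fun i j hij =>
  sol_eq_zero_of_lt b delta (by have : (j : ℕ) < i := hij; omega)

theorem det_waveMatrix : (waveMatrix b T).det = 1 := by
  rw [det_of_isUpperTriangular (waveMatrix_isUpperTriangular b T)]
  exact prod_eq_one fun i _ => sol_self b delta _

theorem waveMatrix_mul_transpose (i j : Fin T) :
    (waveMatrix b T * (waveMatrix b T)ᵀ) i j = waveGram b T (T - i) (T - j) := by
  simp only [mul_apply, waveMatrix, transpose_apply, of_apply]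
  rw [waveGram, ← sum_range_reflect, Fin.sum_univ_eq_sum_range
    (fun n => sol b delta (T - i) (T - n) * sol b delta (T - j) (T - n))]
  refine sum_congr rfl fun n hn => ?_
  rw [show T - 1 - n + 1 = T - n by simp at hn; omega]

theorem connectingMatrix_eq_waveMatrix_mul_transpose :
    (of fun i j : Fin T => Cmat (resp b) T ((i : ℕ) + 1) ((j : ℕ) + 1)) =
      waveMatrix b T * (waveMatrix b T)ᵀ := by
  ext i j
  rw [waveMatrix_mul_transpose, waveGram_eq_revCmat b _ (by omega), of_apply,
    Cmat_eq_revCmat _ (by omega) (by omega), Nat.add_sub_add_right, Nat.add_sub_add_right]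

end WaveMatrix

theorem Matrix.posDef_mul_transpose_self_of_isUnit_det {n : Type*} [Fintype n] [DecidableEq n]
    {A : Matrix n n ℝ} (hA : IsUnit A.det) : (A * Aᵀ).PosDef := by
  simpa only [conjTranspose_eq_transpose_of_trivial] using PosDef.mul_conjTranspose_self A
    (vecMul_injective_iff_isUnit.2 ((isUnit_iff_isUnit_det A).2 hA))

theorem connecting_posdef_det_one_general (b : ℕ → ℝ) (T : ℕ) :
    (Matrix.of fun i j : Fin T => Cmat (resp b) T ((i : ℕ) + 1) ((j : ℕ) + 1)).IsSymm ∧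
    (Matrix.of fun i j : Fin T => Cmat (resp b) T ((i : ℕ) + 1) ((j : ℕ) + 1)).PosDef ∧
    (∀ l, 1 ≤ l → l ≤ T →
      (Matrix.of fun i j : Fin l => Cmat (resp b) l ((i : ℕ) + 1) ((j : ℕ) + 1)).det = 1) := by
  simp only [connectingMatrix_eq_waveMatrix_mul_transpose]
  refine ⟨isSymm_mul_transpose_self _, ?_, fun l _ _ => ?_⟩
  · exact posDef_mul_transpose_self_of_isUnit_det (by rw [det_waveMatrix]; exact isUnit_one)
  · rw [det_mul, det_transpose, det_waveMatrix, one_mul]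

/-- The connecting matrix is symmetric and positive definite, with all leading connecting
matrices of unit determinant. -/
theorem connecting_posdef_det_one (b : ℕ → ℝ) (T : ℕ) (hT : 1 ≤ T) :
    (Matrix.of fun i j : Fin T => Cmat (resp b) T ((i : ℕ) + 1) ((j : ℕ) + 1)).IsSymm ∧
    (Matrix.of fun i j : Fin T => Cmat (resp b) T ((i : ℕ) + 1) ((j : ℕ) + 1)).PosDef ∧
    (∀ l, 1 ≤ l → l ≤ T →
      (Matrix.of fun i j : Fin l => Cmat (resp b) l ((i : ℕ) + 1) ((j : ℕ) + 1)).det = 1) :=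
  connecting_posdef_det_one_general b T
end
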